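/- The MPPI update law follows: E_{P_*}[v_k] = μ_k + E_{P_M}[exp(−S(M,E)/λ)·ε_k] / E_{P_M}[exp(−S(M,E)/λ)], where the expectations over P_M are taken with v_k = μ_k + ε_k and ε_k ~ N(0,Σ) independent. -/
import Mathlib


open Real MeasureTheory Matrix Finset
open scoped ENNReal NNReal

/-- Density of the product Gaussian with block means `M k` and common positive
definite covariance `S`. -/
noncomputable def gaussDensity {m N : ℕ} (S : Matrix (Fin m) (Fin m) ℝ)
    (M : Fin N → Fin m → ℝ) (V : Fin N → Fin m → ℝ) : ℝ :=
  ((2 * Real.pi) ^ m * S.det) ^ (-(N : ℝ) / 2) *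
    Real.exp (-(1 / 2) * ∑ k, (V k - M k) ⬝ᵥ (S⁻¹ *ᵥ (V k - M k)))

/-- The MPPI cost `S(M, E) = J(M+E) + (λ/2) Σ_k μ_k^T Σ⁻¹ (μ_k + 2 ε_k)`. -/
noncomputable def mppiCost {m N : ℕ} (S : Matrix (Fin m) (Fin m) ℝ)
    (J : (Fin N → Fin m → ℝ) → ℝ) (lam : ℝ)
    (M E : Fin N → Fin m → ℝ) : ℝ :=
  J (M + E) + (lam / 2) * ∑ k, M k ⬝ᵥ (S⁻¹ *ᵥ (M k + 2 • E k))

section AuxWithDensity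
variable {α : Type*} [MeasurableSpace α] {E : Type*} [NormedAddCommGroup E] [NormedSpace ℝ E]

lemma mppi_integral_withDensity_ofReal (μ : Measure α) {h : α → ℝ} (hm : Measurable h)
    (hnn : ∀ x, 0 ≤ h x) (F : α → E) :
    ∫ x, F x ∂(μ.withDensity fun x => ENNReal.ofReal (h x)) = ∫ x, h x • F x ∂μ := by
  have e : (fun x => ENNReal.ofReal (h x)) = fun x => ((fun x => (h x).toNNReal) x : ℝ≥0∞) := rfl
  rw [e, integral_withDensity_eq_integral_smul hm.real_toNNReal]
  congr 1; ext x; rw [NNReal.smul_def, Real.coe_toNNReal _ (hnn x)]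

lemma mppi_integrable_withDensity_ofReal (μ : Measure α) {h : α → ℝ} (hm : Measurable h)
    (hnn : ∀ x, 0 ≤ h x) (F : α → E) :
    Integrable F (μ.withDensity fun x => ENNReal.ofReal (h x))
      ↔ Integrable (fun x => h x • F x) μ := by
  have e : (fun x => ENNReal.ofReal (h x)) = fun x => ((fun x => (h x).toNNReal) x : ℝ≥0∞) := rfl
  rw [e, integrable_withDensity_iff_integrable_smul hm.real_toNNReal]
  constructor <;> intro hi <;> refine hi.congr (Filter.Eventually.of_forall fun x => ?_) <;>
    simp only [NNReal.smul_def, Real.coe_toNNReal _ (hnn x)]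

end AuxWithDensity

lemma mppi_dot_symm {m : ℕ} {A : Matrix (Fin m) (Fin m) ℝ} (hA : Aᵀ = A)
    (x y : Fin m → ℝ) : x ⬝ᵥ (A *ᵥ y) = y ⬝ᵥ (A *ᵥ x) := by
  have hAe : ∀ i j, A i j = A j i := fun i j => congrFun (congrFun hA j) i
  simp only [dotProduct, Matrix.mulVec, Finset.mul_sum]
  rw [Finset.sum_comm]
  exact Finset.sum_congr rfl fun j _ => Finset.sum_congr rfl fun i _ => by
    rw [hAe i j]; ring

lemma mppi_key_identity {m N : ℕ} (S : Matrix (Fin m) (Fin m) ℝ) (hA : (S⁻¹)ᵀ = S⁻¹)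
    (J : (Fin N → Fin m → ℝ) → ℝ) (lam : ℝ) (hlam : lam ≠ 0)
    (M E : Fin N → Fin m → ℝ) :
    Real.exp (-(mppiCost S J lam M E) / lam) * gaussDensity S 0 E
      = Real.exp (-(J (M + E)) / lam) * gaussDensity S 0 (M + E) := by
  unfold mppiCost gaussDensity
  simp only [Pi.zero_apply, sub_zero]
  have h : ∀ k : Fin N, ((M + E) k) ⬝ᵥ (S⁻¹ *ᵥ ((M + E) k))
      = (E k) ⬝ᵥ (S⁻¹ *ᵥ (E k))
      + M k ⬝ᵥ (S⁻¹ *ᵥ (M k + 2 • E k)) := by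
    intro k
    simp only [Pi.add_apply]
    rw [Matrix.mulVec_add, Matrix.mulVec_add, Matrix.mulVec_smul, dotProduct_add,
      dotProduct_add, add_dotProduct, add_dotProduct,
      dotProduct_smul]
    have hsym := mppi_dot_symm hA (E k) (M k)
    rw [hsym]
    ring
  have hsum : ∑ k, ((M + E) k) ⬝ᵥ (S⁻¹ *ᵥ ((M + E) k))
      = (∑ k, (E k) ⬝ᵥ (S⁻¹ *ᵥ (E k)))
      + ∑ k, M k ⬝ᵥ (S⁻¹ *ᵥ (M k + 2 • E k)) := by
    rw [← Finset.sum_add_distrib]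
    exact Finset.sum_congr rfl fun k _ => h k
  have hexp : -(J (M + E) + lam / 2 * ∑ k, M k ⬝ᵥ (S⁻¹ *ᵥ (M k + 2 • E k))) / lam
      + (-(1/2) * ∑ k, (E k) ⬝ᵥ (S⁻¹ *ᵥ (E k)))
      = -(J (M + E)) / lam
      + (-(1/2) * ∑ k, ((M + E) k) ⬝ᵥ (S⁻¹ *ᵥ ((M + E) k))) := by
    rw [hsum]; field_simp; ring
  rw [mul_left_comm, mul_left_comm (Real.exp (-(J (M+E))/lam)), ← Real.exp_add,
    ← Real.exp_add, hexp]

theorem mppi_update_law {m N : ℕ}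
    (S : Matrix (Fin m) (Fin m) ℝ) (hS : S.PosDef)
    (J : (Fin N → Fin m → ℝ) → ℝ) (hJ : Measurable J)
    (lam : ℝ) (hlam : 0 < lam)
    (M : Fin N → Fin m → ℝ)
    (P₀ Pstar : Measure (Fin N → Fin m → ℝ))
    (hP₀ : P₀ = volume.withDensity (fun V => ENNReal.ofReal (gaussDensity S 0 V)))
    (η : ℝ) (hη : η = ∫ V, Real.exp (-J V / lam) ∂P₀) (hη0 : 0 < η)
    (hηfin : Integrable (fun V => Real.exp (-J V / lam)) P₀)
    (hPstar : Pstar = volume.withDensity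
      (fun V => ENNReal.ofReal (Real.exp (-J V / lam) * gaussDensity S 0 V / η)))
    (hmean : Integrable (fun V => V) Pstar)
    (hnum : Integrable (fun E => Real.exp (-(mppiCost S J lam M E) / lam) • E) P₀)
    (hden : Integrable (fun E => Real.exp (-(mppiCost S J lam M E) / lam)) P₀)
    (hdenpos : 0 < ∫ E, Real.exp (-(mppiCost S J lam M E) / lam) ∂P₀) :
    ∀ k : Fin N, (∫ V, V k ∂Pstar) =
      M k + (∫ E, Real.exp (-(mppiCost S J lam M E) / lam) ∂P₀)⁻¹ •
        (∫ E, Real.exp (-(mppiCost S J lam M E) / lam) • E k ∂P₀) := by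
  intro k
  -- basic facts
  have hSinv : (S⁻¹)ᵀ = S⁻¹ := by
    rw [Matrix.transpose_nonsing_inv]
    congr 1
    simpa using hS.1.eq
  have hgaussmeas : Measurable (fun V : Fin N → Fin m → ℝ => gaussDensity S 0 V) := by
    unfold gaussDensity
    simp only [dotProduct, Matrix.mulVec]
    fun_prop
  have hgaussnn : ∀ V : Fin N → Fin m → ℝ, 0 ≤ gaussDensity S 0 V := by
    intro V
    unfold gaussDensity
    have : (0:ℝ) ≤ (2 * Real.pi) ^ m * S.det :=
      mul_nonneg (pow_nonneg (by positivity) m) hS.det_pos.le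
    positivity
  set g : (Fin N → Fin m → ℝ) → ℝ := fun V => Real.exp (-J V / lam) * gaussDensity S 0 V
    with hgdef
  -- pointwise identity
  have hpt : ∀ E : Fin N → Fin m → ℝ,
      gaussDensity S 0 E * Real.exp (-(mppiCost S J lam M E) / lam) = g (M + E) := by
    intro E
    rw [mul_comm, mppi_key_identity S hSinv J lam hlam.ne' M E]
  -- η is the volume integral of g
  have hηg : η = ∫ V, g V ∂volume := by
    rw [hη, hP₀, mppi_integral_withDensity_ofReal _ hgaussmeas hgaussnn]
    congr 1; ext V; rw [smul_eq_mul, mul_comm]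
  -- g is integrable
  have hgInt : Integrable g volume := by
    rw [hP₀, mppi_integrable_withDensity_ofReal _ hgaussmeas hgaussnn] at hηfin
    refine hηfin.congr (Filter.Eventually.of_forall fun V => ?_)
    show gaussDensity S 0 V • Real.exp (-J V / lam) = g V
    rw [smul_eq_mul, mul_comm]
  -- denominator equals η
  have hDen : (∫ E, Real.exp (-(mppiCost S J lam M E) / lam) ∂P₀) = η := by
    rw [hP₀, mppi_integral_withDensity_ofReal _ hgaussmeas hgaussnn]
    have : (fun E => gaussDensity S 0 E • Real.exp (-(mppiCost S J lam M E) / lam))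
        = fun E => g (M + E) := by
      ext E; rw [smul_eq_mul, hpt E]
    rw [this, integral_add_left_eq_self g M, hηg]
  -- numerator analysis
  have hnum' : Integrable (fun E : Fin N → Fin m → ℝ => g (M + E) • E k) volume := by
    rw [hP₀, mppi_integrable_withDensity_ofReal _ hgaussmeas hgaussnn] at hnum
    have h1 := (ContinuousLinearMap.proj (R := ℝ) (φ := fun _ : Fin N => Fin m → ℝ) k).integrable_comp hnum
    refine h1.congr (Filter.Eventually.of_forall fun E => ?_)
    simp only [ContinuousLinearMap.proj_apply, Pi.smul_apply]
    rw [smul_smul, hpt E]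
  have hsub : Integrable (fun V : Fin N → Fin m → ℝ => g V • (V k - M k)) volume := by
    have h2 : Integrable (fun E : Fin N → Fin m → ℝ =>
        (fun V => g V • (V k - M k)) (M + E)) volume := by
      refine hnum'.congr (Filter.Eventually.of_forall fun E => ?_)
      simp
    have h3 := h2.comp_add_left (-M)
    refine h3.congr (Filter.Eventually.of_forall fun V => ?_)
    simp
  have hconst : Integrable (fun V : Fin N → Fin m → ℝ => g V • M k) volume :=
    hgInt.smul_const (M k)
  have hVk : Integrable (fun V : Fin N → Fin m → ℝ => g V • V k) volume := by
    refine (hsub.add hconst).congr (Filter.Eventually.of_forall fun V => ?_)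
    show g V • (V k - M k) + g V • M k = g V • V k
    rw [smul_sub, sub_add_cancel]
  -- numerator value
  have hNum : (∫ E, Real.exp (-(mppiCost S J lam M E) / lam) • E k ∂P₀)
      = (∫ V, g V • V k ∂volume) - η • M k := by
    rw [hP₀, mppi_integral_withDensity_ofReal _ hgaussmeas hgaussnn]
    have e1 : (fun E => gaussDensity S 0 E • Real.exp (-(mppiCost S J lam M E) / lam) • E k)
        = fun E => (fun V => g V • (V k - M k)) (M + E) := by
      ext E
      simp only [smul_smul, hpt E, Pi.add_apply, add_sub_cancel_left]
    rw [e1, integral_add_left_eq_self (fun V => g V • (V k - M k)) M]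
    have e2 : (fun V : Fin N → Fin m → ℝ => g V • (V k - M k))
        = fun V => g V • V k - g V • M k := by
      ext V; rw [smul_sub]
    rw [e2, integral_sub hVk hconst, integral_smul_const, hηg]
  -- left-hand side
  have hpmeas : Measurable (fun V : Fin N → Fin m → ℝ =>
      Real.exp (-J V / lam) * gaussDensity S 0 V / η) := by
    apply Measurable.div _ measurable_const
    exact ((hJ.neg.div_const lam).exp).mul hgaussmeas
  have hpnn : ∀ V : Fin N → Fin m → ℝ,
      0 ≤ Real.exp (-J V / lam) * gaussDensity S 0 V / η := fun V =>
    div_nonneg (mul_nonneg (Real.exp_nonneg _) (hgaussnn V)) hη0.le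
  have hLHS : (∫ V, V k ∂Pstar) = η⁻¹ • ∫ V, g V • V k ∂volume := by
    rw [hPstar, mppi_integral_withDensity_ofReal _ hpmeas hpnn]
    have e3 : (fun V : Fin N → Fin m → ℝ =>
        (Real.exp (-J V / lam) * gaussDensity S 0 V / η) • V k)
        = fun V => η⁻¹ • (g V • V k) := by
      ext V
      rw [smul_smul, hgdef]
      congr 1
      field_simp
    rw [e3, integral_smul]
  rw [hLHS, hDen, hNum, smul_sub, smul_smul, inv_mul_cancel₀ hη0.ne', one_smul]
  abel
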